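/- arXiv:2405.03367 — 2 statements merged into one kernel-verified Lean document; each statement's English description precedes it below -/
import Mathlib

section
/- (Non-Horn case) Let ι be a ground Equality Resolution inference with premise (C' ∨ s ≉ s' · θ) (where sθ = s'θ, σ = mgu(s,s'), and (s ≉ s')θ is maximal in (C' ∨ s ≉ s')θ) and conclusion (C'σ · θ). Then for every left-reduced ground rewrite system R contained in ≻, the conclusion is smaller than the premise in the non-Horn R-normalization closure ordering: (C'σ · θ) ≪_R (C' ∨ s ≉ s' · θ). -/
/- Common infrastructure: first-order terms, clauses, ground rewrite systems,
   reduction orderings, the (Horn and non-Horn) R-normalization closure orderings,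
   the Ground Closure (Horn) Superposition Calculus and its redundancy criterion,
   and the candidate interpretation construction, following Waldmann,
   "On the (In-)Completeness of Destructive Equality Resolution in the
   Superposition Calculus". -/

set_option autoImplicit false
set_option maxHeartbeats 1000000

noncomputable section

/-- First-order terms over function symbols `F` and variables `V`. -/
inductive Trm (F V : Type) : Type
  | var : V → Trm F V
  | app : F → List (Trm F V) → Trm F V

namespace Trm
variable {F V : Type}

instance : DecidableEq (Trm F V) := Classical.decEq _

/-- Application of a substitution to a term. -/
def subst (θ : V → Trm F V) : Trm F V → Trm F V
  | var x => θ x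
  | app f ts => app f (ts.attach.map fun t => subst θ t.1)
decreasing_by
  have := List.sizeOf_lt_of_mem t.2
  simp only [Trm.app.sizeOf_spec]
  omega

/-- A term is ground if it contains no variables. -/
inductive IsGround : Trm F V → Prop
  | app {f : F} {ts : List (Trm F V)} : (∀ t ∈ ts, IsGround t) → IsGround (app f ts)

/-- The set of all subterms of a term (including the term itself). -/
def subterms : Trm F V → Finset (Trm F V)
  | var x => {var x}
  | app f ts => insert (app f ts) ((ts.attach.map fun t => subterms t.1).foldr (· ∪ ·) ∅)
decreasing_by
  have := List.sizeOf_lt_of_mem t.2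
  simp only [Trm.app.sizeOf_spec]
  omega

/-- The set of proper subterms of a term (subterms at positions `> ε`). -/
def psubterms : Trm F V → Finset (Trm F V)
  | var _ => ∅
  | app _ ts => (ts.map fun t => subterms t).foldr (· ∪ ·) ∅

end Trm

/-- Contexts: terms with exactly one hole. -/
inductive Ctx (F V : Type) : Type
  | hole : Ctx F V
  | app : F → List (Trm F V) → Ctx F V → List (Trm F V) → Ctx F V

/-- Filling the hole of a context with a term. -/
def Ctx.fill {F V : Type} : Ctx F V → Trm F V → Trm F V
  | .hole, t => t
  | .app f l c r, t => Trm.app f (l ++ c.fill t :: r)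

variable {F V : Type}

/-- `RewAt R s t u root` holds iff `s` rewrites to `t` in one step using a rule of `R`
whose left-hand side is `u`, and `root = true` iff the rewrite position is `ε`. -/
inductive RewAt (R : Set (Trm F V × Trm F V)) : Trm F V → Trm F V → Trm F V → Bool → Prop
  | root {u v : Trm F V} : (u, v) ∈ R → RewAt R u v u true
  | congr {t t' u : Trm F V} {b : Bool} {f : F} {l r : List (Trm F V)} :
      RewAt R t t' u b → RewAt R (.app f (l ++ t :: r)) (.app f (l ++ t' :: r)) u false

/-- One-step rewrite relation `s →_R t`. -/
def Step (R : Set (Trm F V × Trm F V)) (s t : Trm F V) : Prop := ∃ u b, RewAt R s t u b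

/-- `t` is irreducible w.r.t. `R`. -/
def Irred (R : Set (Trm F V × Trm F V)) (t : Trm F V) : Prop := ∀ t', ¬ Step R t t'

/-- `R` is left-reduced: the left-hand side of each rule is irreducible by the other rules. -/
def LeftReduced (R : Set (Trm F V × Trm F V)) : Prop := ∀ p ∈ R, Irred (R \ {p}) p.1

/-- A reduction ordering that is total on ground terms. -/
structure ReductionOrdering (F V : Type) where
  gt : Trm F V → Trm F V → Prop
  trans : ∀ {a b c : Trm F V}, gt a b → gt b c → gt a c
  wf : WellFounded fun a b : Trm F V => gt b a
  compat_ctx : ∀ {s t : Trm F V} (f : F) (l r : List (Trm F V)),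
      gt s t → gt (.app f (l ++ s :: r)) (.app f (l ++ t :: r))
  compat_subst : ∀ {s t : Trm F V} (θ : V → Trm F V), gt s t → gt (s.subst θ) (t.subst θ)
  total_ground : ∀ {s t : Trm F V}, s.IsGround → t.IsGround → s ≠ t → gt s t ∨ gt t s

/-- A left-reduced ground rewrite system contained in the reduction ordering `O`. -/
def GoodRS (O : ReductionOrdering F V) (R : Set (Trm F V × Trm F V)) : Prop :=
  LeftReduced R ∧ ∀ p ∈ R, p.1.IsGround ∧ p.2.IsGround ∧ O.gt p.1 p.2

/-- Reflexive-transitive rewriting to an `R`-normal form. -/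
def ReachNF (R : Set (Trm F V × Trm F V)) (t t' : Trm F V) : Prop :=
  Relation.ReflTransGen (Step R) t t' ∧ Irred R t'

open Classical in
/-- The `R`-normal form `t↓_R` of `t` (via choice; unique for terminating confluent `R`). -/
def nf (R : Set (Trm F V × Trm F V)) (t : Trm F V) : Trm F V :=
  if h : ∃ t', ReachNF R t t' then h.choose else t

/-- The graph of the labeled `R`-redex multiset function `rm_R(t,m)` of Definition 1:
`RM R t m S` holds iff `S` is a possible result of collecting the labeled redexes and
recursing along some `R`-normalization of `t`. -/
inductive RM (R : Set (Trm F V × Trm F V)) : Trm F V → ℕ → Multiset (Trm F V × ℕ) → Prop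
  | irred {t : Trm F V} {m : ℕ} : Irred R t → RM R t m 0
  | step_top {t t' u : Trm F V} {b : Bool} {m : ℕ} {S : Multiset (Trm F V × ℕ)} :
      RewAt R t t' u b → (b = true ∨ 0 < m) → RM R t' m S → RM R t m ((u, m) ::ₘ S)
  | step_deep {t t' u : Trm F V} {S : Multiset (Trm F V × ℕ)} :
      RewAt R t t' u false → RM R t' 0 S → RM R t 0 ((u, 1) ::ₘ S)

open Classical in
/-- The labeled `R`-redex multiset `rm_R(t,m)` (via choice; unique under the
hypotheses of Lemma 1). -/
def rm (R : Set (Trm F V × Trm F V)) (t : Trm F V) (m : ℕ) : Multiset (Trm F V × ℕ) :=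
  if h : ∃ S, RM R t m S then h.choose else 0

/-- Equational literals. -/
inductive Lit (F V : Type) : Type
  | pos : Trm F V → Trm F V → Lit F V
  | neg : Trm F V → Trm F V → Lit F V

instance : DecidableEq (Lit F V) := Classical.decEq _

def Lit.subst (θ : V → Trm F V) : Lit F V → Lit F V
  | .pos s t => .pos (s.subst θ) (t.subst θ)
  | .neg s t => .neg (s.subst θ) (t.subst θ)

def Lit.IsGround : Lit F V → Prop
  | .pos s t => s.IsGround ∧ t.IsGround
  | .neg s t => s.IsGround ∧ t.IsGround

def Lit.posQ : Lit F V → Bool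
  | .pos _ _ => true
  | .neg _ _ => false

/-- A clause is a finite multiset of literals; `⊥` is the empty clause `0`. -/
abbrev Clause (F V : Type) := Multiset (Lit F V)

def Clause.subst (θ : V → Trm F V) (C : Clause F V) : Clause F V := C.map (Lit.subst θ)

def Clause.IsGround (C : Clause F V) : Prop := ∀ L ∈ C, L.IsGround

/-- Horn clause: at most one positive literal. -/
def IsHorn (C : Clause F V) : Prop := Multiset.card (C.filter fun L => L.posQ = true) ≤ 1

/-- The (Dershowitz-Manna) multiset extension of a relation, `M` greater than `N`. -/
def MultGT {α : Type} (r : α → α → Prop) (M N : Multiset α) : Prop :=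
  ∃ X Y Z, M = Z + X ∧ N = Z + Y ∧ X ≠ 0 ∧ ∀ y ∈ Y, ∃ x ∈ X, r x y

/-- The multiset associated to a literal for the literal ordering. -/
def Lit.mset : Lit F V → Multiset (Trm F V)
  | .pos s t => {s, t}
  | .neg s t => {s, s, t, t}

/-- The literal ordering `≻_L`. -/
def litGT (O : ReductionOrdering F V) (L L' : Lit F V) : Prop := MultGT O.gt L.mset L'.mset

/-- The clause ordering `≻_C`. -/
def clauseGT (O : ReductionOrdering F V) (C D : Clause F V) : Prop := MultGT (litGT O) C D

/-- `L` is maximal w.r.t. the rest clause `D`. -/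
def MaxIn (O : ReductionOrdering F V) (L : Lit F V) (D : Clause F V) : Prop :=
  ∀ L' ∈ D, ¬ litGT O L' L

/-- `L` is strictly maximal w.r.t. the rest clause `D`. -/
def SMaxIn (O : ReductionOrdering F V) (L : Lit F V) (D : Clause F V) : Prop :=
  ∀ L' ∈ D, ¬ litGT O L' L ∧ L' ≠ L

section TermSets

def Lit.negSubs : Lit F V → Finset (Trm F V)
  | .neg s t => s.subterms ∪ t.subterms
  | .pos _ _ => ∅

def Lit.posPSubs : Lit F V → Finset (Trm F V)
  | .pos s t => s.psubterms ∪ t.psubterms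
  | .neg _ _ => ∅

def Lit.posSubs : Lit F V → Finset (Trm F V)
  | .pos s t => s.subterms ∪ t.subterms
  | .neg _ _ => ∅

def Lit.negTops : Lit F V → Finset (Trm F V)
  | .neg s t => {s, t}
  | .pos _ _ => ∅

def Lit.posTops : Lit F V → Finset (Trm F V)
  | .pos s t => {s, t}
  | .neg _ _ => ∅

def Lit.allSubs : Lit F V → Finset (Trm F V)
  | .pos s t => s.subterms ∪ t.subterms
  | .neg s t => s.subterms ∪ t.subterms

/-- `ss⁻(C)`: subterms of sides of negative literals. -/
def ssN (C : Clause F V) : Finset (Trm F V) := C.toFinset.sup Lit.negSubs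
/-- `ss⁺_{>ε}(C)`: proper subterms of sides of positive literals. -/
def ssPp (C : Clause F V) : Finset (Trm F V) := C.toFinset.sup Lit.posPSubs
/-- All subterms of sides of positive literals. -/
def ssP (C : Clause F V) : Finset (Trm F V) := C.toFinset.sup Lit.posSubs
/-- `ts⁻(C)`: sides of negative literals. -/
def tsN (C : Clause F V) : Finset (Trm F V) := C.toFinset.sup Lit.negTops
/-- `ts⁺(C)`: sides of positive literals. -/
def tsP (C : Clause F V) : Finset (Trm F V) := C.toFinset.sup Lit.posTops
/-- All subterms occurring in `C`. -/
def allSub (C : Clause F V) : Finset (Trm F V) := C.toFinset.sup Lit.allSubs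

/-- The labeled subterm set `lss(C)` of Definition 1. -/
def lss (C : Clause F V) : Finset (Trm F V × ℕ) :=
  (ssN C).image (fun t => (t, 2)) ∪ ((ssPp C \ ssN C).image fun t => (t, 1)) ∪
    ((tsP C \ (ssPp C ∪ ssN C)).image fun t => (t, 0))

/-- The labeled topterm set `lts(C)` of Definition 1. -/
def lts (C : Clause F V) : Finset (Trm F V × ℕ) :=
  (tsN C).image (fun t => (t, 2)) ∪ ((tsP C \ tsN C).image fun t => (t, 0))

end TermSets

/-- Contribution of one labeled subterm of `C` to `nm_R(C·θ)`. -/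
def nmElt (R : Set (Trm F V × Trm F V)) (θ : V → Trm F V) : Trm F V × ℕ → Multiset (Trm F V × ℕ)
  | (.var x, m) => rm R (θ x) m
  | (.app f ts, m) => rm R (.app f (ts.map fun t => nf R (t.subst θ))) m

/-- The `R`-normalization multiset `nm_R(C·θ)` of Definition 2 (Horn case). -/
def nm (R : Set (Trm F V × Trm F V)) (C : Clause F V) (θ : V → Trm F V) :
    Multiset (Trm F V × ℕ) :=
  (lss C).sum (nmElt R θ) + (lts C).sum fun p => {(nf R (p.1.subst θ), p.2)}

/-- A closure `(C·θ)`. -/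
abbrev Closure (F V : Type) := Clause F V × (V → Trm F V)

/-- The ground instance `Cθ` represented by a closure `(C·θ)`. -/
def Closure.inst (c : Closure F V) : Clause F V := Clause.subst c.2 c.1

def Closure.IsGround (c : Closure F V) : Prop := Clause.IsGround c.inst

/-- Equality of clauses up to bijective variable renaming. -/
def ClauseAlphaEq (C D : Clause F V) : Prop :=
  ∃ ρ : V ≃ V, Clause.subst (fun x => Trm.var (ρ x)) C = D

/-- Identification of closures: equal up to bijective renaming (with the same
ground instance). -/
def CloAlphaEq (c d : Closure F V) : Prop := ClauseAlphaEq c.1 d.1 ∧ c.inst = d.inst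

/-- The tie-breaking closure ordering `≻_Clo`: an arbitrary well-founded ordering on
ground closures, total on closures with the same ground instance, such that
`(C·θ₁) ≻_Clo (D·θ₂)` whenever `Cθ₁ = Dθ₂` and `D` is an instance of `C` but not
vice versa. -/
structure TieBreak (F V : Type) where
  gt : Closure F V → Closure F V → Prop
  wf : WellFounded fun a b : Closure F V => gt b a
  total : ∀ c d : Closure F V, c.inst = d.inst → CloAlphaEq c d ∨ gt c d ∨ gt d c
  inst_gt : ∀ c d : Closure F V, c.inst = d.inst →
      (∃ σ, Clause.subst σ c.1 = d.1) → (¬ ∃ σ, Clause.subst σ d.1 = c.1) → gt c d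

/-- Lexicographic combination of `≻` and `>` on labeled terms. -/
def lexGT (O : ReductionOrdering F V) (p q : Trm F V × ℕ) : Prop :=
  O.gt p.1 q.1 ∨ (p.1 = q.1 ∧ q.2 < p.2)

/-- The `R`-normalization closure ordering `≫_R` of Definition 2 (Horn case). -/
def cloGT (O : ReductionOrdering F V) (T : TieBreak F V) (R : Set (Trm F V × Trm F V))
    (c d : Closure F V) : Prop :=
  MultGT (lexGT O) (nm R c.1 c.2) (nm R d.1 d.2)
  ∨ (nm R c.1 c.2 = nm R d.1 d.2 ∧ clauseGT O c.inst d.inst)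
  ∨ (nm R c.1 c.2 = nm R d.1 d.2 ∧ c.inst = d.inst ∧ T.gt c d)

/-- Convertibility w.r.t. a set of ground equations: the congruence generated by `E`. -/
inductive Conv (E : Set (Trm F V × Trm F V)) : Trm F V → Trm F V → Prop
  | rel {s t : Trm F V} : (s, t) ∈ E → Conv E s t
  | refl (t : Trm F V) : Conv E t t
  | symm {s t : Trm F V} : Conv E s t → Conv E t s
  | trans {s t u : Trm F V} : Conv E s t → Conv E t u → Conv E s u
  | congr {t t' : Trm F V} {f : F} {l r : List (Trm F V)} :
      Conv E t t' → Conv E (.app f (l ++ t :: r)) (.app f (l ++ t' :: r))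

/-- Truth of a literal in the equality Herbrand interpretation generated by `E`. -/
def litTrue (E : Set (Trm F V × Trm F V)) : Lit F V → Prop
  | .pos s t => Conv E s t
  | .neg s t => ¬ Conv E s t

/-- Truth of a (ground) clause in the equality Herbrand interpretation generated by `E`. -/
def ModelsC (E : Set (Trm F V × Trm F V)) (D : Clause F V) : Prop := ∃ L ∈ D, litTrue E L

/-- `R ⊨ (C·θ)`. -/
def Models (E : Set (Trm F V × Trm F V)) (c : Closure F V) : Prop := ModelsC E c.inst

/-- `σ` is an idempotent most general unifier of `s` and `s'`. -/
def IsMGU (σ : V → Trm F V) (s s' : Trm F V) : Prop :=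
  s.subst σ = s'.subst σ ∧
  ∀ τ : V → Trm F V, s.subst τ = s'.subst τ → ∀ x, (σ x).subst τ = τ x

/-- Replacement of all occurrences of `u` by `v` in a term. -/
def replAll (u v : Trm F V) : Trm F V → Trm F V
  | .var x => if Trm.var x = u then v else .var x
  | .app f ts => if Trm.app f ts = u then v else .app f (ts.attach.map fun s => replAll u v s.1)
decreasing_by
  have := List.sizeOf_lt_of_mem s.2
  simp only [Trm.app.sizeOf_spec]
  omega

/-- Replacement of all occurrences of `u` by `v` in a clause. -/
def Clause.replAll (u v : Trm F V) (C : Clause F V) : Clause F V :=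
  C.map fun L => match L with
    | .pos s t => .pos (_root_.replAll u v s) (_root_.replAll u v t)
    | .neg s t => .neg (_root_.replAll u v s) (_root_.replAll u v t)

instance : DecidableEq V := Classical.decEq _

/-- Single-point substitution `{x ↦ t}`. -/
def single (x : V) (t : Trm F V) : V → Trm F V := fun y => if y = x then t else Trm.var y

/-- Ground inferences of the Ground Closure (Horn) Superposition Calculus.
`eqres` is Equality Resolution, `ps1` is Parallel Superposition I (overlap at a
non-variable position `u`), `ps2` is Parallel Superposition II (overlap at or below
a variable `x`, with `xθ = u[tθ]` for a context `u`). -/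
inductive GInf (F V : Type) : Type
  | eqres (C' : Clause F V) (s s' : Trm F V) (σ θ : V → Trm F V)
  | ps1 (D' : Clause F V) (t t' : Trm F V) (C : Clause F V) (u : Trm F V) (σ θ : V → Trm F V)
  | ps2 (D' : Clause F V) (t t' : Trm F V) (C : Clause F V) (x : V) (u : Ctx F V) (θ : V → Trm F V)

namespace GInf

/-- The conclusion of a ground inference. -/
def concl : GInf F V → Closure F V
  | .eqres C' _ _ σ θ => (Clause.subst σ C', θ)
  | .ps1 D' _ t' C u σ θ => (Clause.subst σ (D' + Clause.replAll u t' C), θ)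
  | .ps2 D' _ t' C x u θ => (D' + C, Function.update θ x (u.fill (t'.subst θ)))

/-- The right (or only) premise of a ground inference. -/
def rprem : GInf F V → Closure F V
  | .eqres C' s s' _ θ => (C' + {Lit.neg s s'}, θ)
  | .ps1 _ _ _ C _ _ θ => (C, θ)
  | .ps2 _ _ _ C _ _ θ => (C, θ)

/-- The left premise of a (Superposition) ground inference. -/
def lprem : GInf F V → Closure F V
  | .eqres C' s s' _ θ => (C' + {Lit.neg s s'}, θ)
  | .ps1 D' t t' _ _ _ θ => (D' + {Lit.pos t t'}, θ)
  | .ps2 D' t t' _ _ _ θ => (D' + {Lit.pos t t'}, θ)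

/-- The list of premises of a ground inference. -/
def prems : GInf F V → List (Closure F V)
  | .eqres C' s s' _ θ => [(C' + {Lit.neg s s'}, θ)]
  | .ps1 D' t t' C _ _ θ => [(D' + {Lit.pos t t'}, θ), (C, θ)]
  | .ps2 D' t t' C _ _ θ => [(D' + {Lit.pos t t'}, θ), (C, θ)]

/-- Is the inference a Superposition inference? -/
def IsSup : GInf F V → Prop
  | .eqres _ _ _ _ _ => False
  | .ps1 _ _ _ _ _ _ _ => True
  | .ps2 _ _ _ _ _ _ _ => True

/-- For a Superposition inference with left premise `(D' ∨ t ≈ t' · θ)`: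
the rule `tθ → t'θ` belongs to `R`. -/
def ruleIn (R : Set (Trm F V × Trm F V)) : GInf F V → Prop
  | .eqres _ _ _ _ _ => False
  | .ps1 _ t t' _ _ _ θ => (t.subst θ, t'.subst θ) ∈ R
  | .ps2 _ t t' _ _ _ θ => (t.subst θ, t'.subst θ) ∈ R

/-- Condition (iii) of Definition 5: a Superposition inference with left premise
`(D' ∨ t ≈ t' · θ)` such that `tθ ≻ t'θ` and `(tθ → t'θ) ∉ R`. -/
def ruleNotIn (O : ReductionOrdering F V) (R : Set (Trm F V × Trm F V)) : GInf F V → Prop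
  | .eqres _ _ _ _ _ => False
  | .ps1 _ t t' _ _ _ θ => O.gt (t.subst θ) (t'.subst θ) ∧ (t.subst θ, t'.subst θ) ∉ R
  | .ps2 _ t t' _ _ _ θ => O.gt (t.subst θ) (t'.subst θ) ∧ (t.subst θ, t'.subst θ) ∉ R

end GInf

/-- The common ordering side conditions of the Parallel Superposition rules, for a
left premise `D' ∨ t ≈ t'`, right premise `C`, overlapped term (or variable) `u`,
under the ground substitution `θ`. -/
def SideConds (O : ReductionOrdering F V) (D' : Clause F V) (t t' : Trm F V)
    (C : Clause F V) (u : Trm F V) (θ : V → Trm F V) : Prop :=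
  (u ∈ ssN C ∪ ssPp C →
     clauseGT O (Clause.subst θ C) (Clause.subst θ (D' + {Lit.pos t t'}))) ∧
  (∃ s s',
      (Lit.pos s s' ∈ C ∧ u ∈ s.subterms ∧ O.gt (s.subst θ) (s'.subst θ) ∧
        SMaxIn O (Lit.subst θ (Lit.pos s s')) (Clause.subst θ (C.erase (Lit.pos s s')))) ∨
      (Lit.neg s s' ∈ C ∧ u ∈ s.subterms ∧ O.gt (s.subst θ) (s'.subst θ) ∧
        MaxIn O (Lit.subst θ (Lit.neg s s')) (Clause.subst θ (C.erase (Lit.neg s s'))))) ∧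
  SMaxIn O (Lit.subst θ (Lit.pos t t')) (Clause.subst θ D') ∧
  O.gt (t.subst θ) (t'.subst θ)

/-- Validity of a ground inference: all side conditions of the corresponding rule of
the Ground Closure Horn Superposition Calculus hold. -/
def GInf.IsInf (O : ReductionOrdering F V) : GInf F V → Prop
  | .eqres C' s s' σ θ =>
      Closure.IsGround (C' + {Lit.neg s s'}, θ) ∧
      s.subst θ = s'.subst θ ∧ IsMGU σ s s' ∧
      MaxIn O (Lit.subst θ (Lit.neg s s')) (Clause.subst θ C')
  | .ps1 D' t t' C u σ θ =>
      Closure.IsGround (D' + {Lit.pos t t'}, θ) ∧ Closure.IsGround (C, θ) ∧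
      (¬ ∃ x, u = Trm.var x) ∧ t.subst θ = u.subst θ ∧ IsMGU σ t u ∧
      u ∈ allSub C ∧ SideConds O D' t t' C u θ
  | .ps2 D' t t' C x u θ =>
      Closure.IsGround (D' + {Lit.pos t t'}, θ) ∧ Closure.IsGround (C, θ) ∧
      Trm.var x ∈ allSub C ∧ θ x = u.fill (t.subst θ) ∧
      SideConds O D' t t' C (Trm.var x) θ

/-- Redundant closures (Definition 3). -/
def RedC (O : ReductionOrdering F V) (T : TieBreak F V) (N : Set (Closure F V))
    (c : Closure F V) : Prop :=
  ∀ R, GoodRS O R → Models R c ∨ ∃ d ∈ N, cloGT O T R c d ∧ ¬ Models R d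

/-- Redundant inferences (Definition 4). -/
def RedI (O : ReductionOrdering F V) (T : TieBreak F V) (N : Set (Closure F V))
    (ι : GInf F V) : Prop :=
  ∀ R, GoodRS O R →
    Models R ι.concl
    ∨ (∃ c ∈ N, cloGT O T R ι.rprem c ∧ ¬ Models R c)
    ∨ ι.ruleNotIn O R
    ∨ (ι.IsSup ∧ cloGT O T R ι.lprem ι.rprem)

section Candidate

/-- `s` is a strictly maximal term of the ground clause `D` and occurs in `D` only
(at the top) in positive literals. -/
def StrictMaxTermPos (O : ReductionOrdering F V) (D : Clause F V) (s : Trm F V) : Prop :=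
  (∀ w ∈ allSub D, w = s ∨ O.gt s w) ∧ s ∉ ssN D ∧ s ∉ ssPp D ∧ s ∈ tsP D

/-- The productivity conditions (Horn case) for the closure `(C' ∨ u ≈ u' · θ) ∈ N`
w.r.t. the partial interpretation `Rs`. -/
def ProdConds (O : ReductionOrdering F V) (N : Set (Closure F V))
    (Rs : Set (Trm F V × Trm F V)) (C' : Clause F V) (u u' : Trm F V)
    (θ : V → Trm F V) : Prop :=
  (C' + {Lit.pos u u'}, θ) ∈ N ∧
  Closure.IsGround (C' + {Lit.pos u u'}, θ) ∧
  StrictMaxTermPos O (Clause.subst θ (C' + {Lit.pos u u'})) (u.subst θ) ∧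
  Irred Rs (u.subst θ) ∧
  ¬ Models Rs (C' + {Lit.pos u u'}, θ) ∧
  O.gt (u.subst θ) (u'.subst θ)

/-- `(C' ∨ u ≈ u' · θ)` is the `≫_{Rs}`-smallest closure in `N` satisfying the
productivity conditions for the left-hand side `s`. -/
def ProducesFor (O : ReductionOrdering F V) (T : TieBreak F V) (N : Set (Closure F V))
    (Rs : Set (Trm F V × Trm F V)) (s : Trm F V) (C' : Clause F V) (u u' : Trm F V)
    (θ : V → Trm F V) : Prop :=
  u.subst θ = s ∧ ProdConds O N Rs C' u u' θ ∧
  ∀ D' v v' θ', v.subst θ' = s → ProdConds O N Rs D' v v' θ' →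
    (D' + {Lit.pos v v'}, θ') = (C' + {Lit.pos u u'}, θ) ∨
    cloGT O T Rs (D' + {Lit.pos v v'}, θ') (C' + {Lit.pos u u'}, θ)

/-- `R_s = ⋃_{t ≺ s} E_t`. -/
def Rbelow (O : ReductionOrdering F V) (E : Trm F V → Set (Trm F V × Trm F V))
    (s : Trm F V) : Set (Trm F V × Trm F V) :=
  { p | ∃ t, O.gt s t ∧ p ∈ E t }

/-- `R_* = ⋃_t E_t`. -/
def Rstar (E : Trm F V → Set (Trm F V × Trm F V)) : Set (Trm F V × Trm F V) :=
  { p | ∃ t, p ∈ E t }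

/-- `E` is the family of rule sets of the candidate interpretation constructed from `N`:
`E s = {s → u'θ}` for the `≫_{R_s}`-smallest productive closure for `s` if one
exists, and `E s = ∅` otherwise. -/
def IsCandidate (O : ReductionOrdering F V) (T : TieBreak F V) (N : Set (Closure F V))
    (E : Trm F V → Set (Trm F V × Trm F V)) : Prop :=
  ∀ s : Trm F V,
    (∃ C' u u' θ, ProducesFor O T N (Rbelow O E s) s C' u u' θ ∧
        E s = {(s, u'.subst θ)})
    ∨ ((¬ ∃ C' u u' θ, ProducesFor O T N (Rbelow O E s) s C' u u' θ) ∧ E s = ∅)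

/-- The closure `(C' ∨ u ≈ u' · θ)` produces the rule `uθ → u'θ` in the candidate
interpretation given by `E`. -/
def ProducesRule (O : ReductionOrdering F V) (T : TieBreak F V) (N : Set (Closure F V))
    (E : Trm F V → Set (Trm F V × Trm F V)) (C' : Clause F V) (u u' : Trm F V)
    (θ : V → Trm F V) : Prop :=
  ProducesFor O T N (Rbelow O E (u.subst θ)) (u.subst θ) C' u u' θ ∧
  E (u.subst θ) = {(u.subst θ, u'.subst θ)}

end Candidate

section NonHorn

/-- The graph of the (non-Horn) `R`-redex multiset function `rm_R(t)` of Definition 7. -/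
inductive RMn (R : Set (Trm F V × Trm F V)) :
    Trm F V → Multiset (Multiset (Trm F V)) → Prop
  | irred {t : Trm F V} : Irred R t → RMn R t 0
  | step {t t' u : Trm F V} {b : Bool} {S : Multiset (Multiset (Trm F V))} :
      RewAt R t t' u b → RMn R t' S → RMn R t (({u, u} : Multiset (Trm F V)) ::ₘ S)

open Classical in
/-- The (non-Horn) `R`-redex multiset `rm_R(t)` (via choice). -/
def rmN (R : Set (Trm F V × Trm F V)) (t : Trm F V) : Multiset (Multiset (Trm F V)) :=
  if h : ∃ S, RMn R t S then h.choose else 0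

/-- Contribution of one subterm of a negative literal to the non-Horn `nm_R(C·θ)`. -/
def nmNElt (R : Set (Trm F V × Trm F V)) (θ : V → Trm F V) :
    Trm F V → Multiset (Multiset (Trm F V))
  | .var x => rmN R (θ x)
  | .app f ts => rmN R (.app f (ts.map fun t => nf R (t.subst θ)))

/-- The non-Horn `R`-normalization multiset `nm_R(C·θ)` of Definition 8. -/
def nmN (R : Set (Trm F V × Trm F V)) (C : Clause F V) (θ : V → Trm F V) :
    Multiset (Multiset (Trm F V)) :=
  (ssN C).sum (nmNElt R θ) +
  (tsN C).sum (fun t => {({nf R (t.subst θ), nf R (t.subst θ)} : Multiset (Trm F V))}) +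
  (C.map fun L => match L with
     | .pos s s' => (({({s.subst θ, s'.subst θ} : Multiset (Trm F V))}) :
         Multiset (Multiset (Trm F V)))
     | .neg _ _ => 0).sum

/-- The non-Horn `R`-normalization closure ordering `≫_R` of Definition 8. -/
def cloGTN (O : ReductionOrdering F V) (T : TieBreak F V) (R : Set (Trm F V × Trm F V))
    (c d : Closure F V) : Prop :=
  MultGT (MultGT O.gt) (nmN R c.1 c.2) (nmN R d.1 d.2)
  ∨ (nmN R c.1 c.2 = nmN R d.1 d.2 ∧ clauseGT O c.inst d.inst)
  ∨ (nmN R c.1 c.2 = nmN R d.1 d.2 ∧ c.inst = d.inst ∧ T.gt c d)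

end NonHorn

section Lifting

/-- The set `G(N)` of ground closures of a set `N` of clauses. -/
def GClosures (N : Set (Clause F V)) : Set (Closure F V) :=
  { c | c.1 ∈ N ∧ c.IsGround }

/-- The ordering side conditions of the non-ground Parallel Superposition rule, for
left premise `D' ∨ t ≈ t'`, right premise `C`, overlapped non-variable subterm `u`,
and mgu `σ`. -/
def NGSideConds (O : ReductionOrdering F V) (D' : Clause F V) (t t' : Trm F V)
    (C : Clause F V) (u : Trm F V) (σ : V → Trm F V) : Prop :=
  (u ∈ ssN C ∪ ssPp C →
     ¬ (clauseGT O (Clause.subst σ (D' + {Lit.pos t t'})) (Clause.subst σ C) ∨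
        Clause.subst σ C = Clause.subst σ (D' + {Lit.pos t t'}))) ∧
  (∃ s s',
      (Lit.pos s s' ∈ C ∧ u ∈ s.subterms ∧
        ¬ (O.gt (s'.subst σ) (s.subst σ) ∨ s.subst σ = s'.subst σ) ∧
        SMaxIn O (Lit.subst σ (Lit.pos s s')) (Clause.subst σ (C.erase (Lit.pos s s')))) ∨
      (Lit.neg s s' ∈ C ∧ u ∈ s.subterms ∧
        ¬ (O.gt (s'.subst σ) (s.subst σ) ∨ s.subst σ = s'.subst σ) ∧
        MaxIn O (Lit.subst σ (Lit.neg s s')) (Clause.subst σ (C.erase (Lit.neg s s'))))) ∧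
  SMaxIn O (Lit.subst σ (Lit.pos t t')) (Clause.subst σ D') ∧
  ¬ (O.gt (t'.subst σ) (t.subst σ) ∨ t.subst σ = t'.subst σ)

/-- The ground inference `ι` is a ground instance of an inference of the
(non-ground) Horn Superposition Calculus with Parallel Superposition whose
premises are exactly the clauses occurring in the premise closures of `ι`. -/
def IsGroundInstOfNG (O : ReductionOrdering F V) : GInf F V → Prop
  | .eqres C' s s' σ _ =>
      IsMGU σ s s' ∧
      MaxIn O (Lit.subst σ (Lit.neg s s')) (Clause.subst σ C')
  | .ps1 D' t t' C u σ _ =>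
      (¬ ∃ x, u = Trm.var x) ∧ IsMGU σ t u ∧ u ∈ allSub C ∧
      NGSideConds O D' t t' C u σ
  | .ps2 _ _ _ _ _ _ _ => False

/-- Non-ground inferences of the Horn Superposition Calculus with Parallel
Superposition. -/
inductive NGInf (F V : Type) : Type
  | eqres (C' : Clause F V) (s s' : Trm F V) (σ : V → Trm F V)
  | psup (D' : Clause F V) (t t' : Trm F V) (C : Clause F V) (u : Trm F V) (σ : V → Trm F V)

namespace NGInf

/-- Side conditions of the non-ground rules. -/
def IsInf (O : ReductionOrdering F V) : NGInf F V → Prop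
  | .eqres C' s s' σ =>
      IsMGU σ s s' ∧ MaxIn O (Lit.subst σ (Lit.neg s s')) (Clause.subst σ C')
  | .psup D' t t' C u σ =>
      (¬ ∃ x, u = Trm.var x) ∧ IsMGU σ t u ∧ u ∈ allSub C ∧
      NGSideConds O D' t t' C u σ

/-- Premises of a non-ground inference. -/
def prems : NGInf F V → List (Clause F V)
  | .eqres C' s s' _ => [C' + {Lit.neg s s'}]
  | .psup D' t t' C _ _ => [D' + {Lit.pos t t'}, C]

/-- Conclusion of a non-ground inference. -/
def concl : NGInf F V → Clause F V
  | .eqres C' _ _ σ => Clause.subst σ C'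
  | .psup D' _ t' C u σ => Clause.subst σ (D' + Clause.replAll u t' C)

/-- The set `G(ι)` of ground instances of a non-ground inference. -/
def GInsts (O : ReductionOrdering F V) : NGInf F V → Set (GInf F V)
  | .eqres C' s s' σ => { g | ∃ θ, g = GInf.eqres C' s s' σ θ ∧ g.IsInf O }
  | .psup D' t t' C u σ => { g | ∃ θ, g = GInf.ps1 D' t t' C u σ θ ∧ g.IsInf O }

end NGInf

end Lifting

/-!
Since `θ` unifies `s` and `s'`, the mgu `σ` satisfies `σθ = θ`. A subterm of a negative side of
`C'σ` is either `wσ` for a non-variable subterm `w` of `C'`, which contributes to `nm_R(C'σ·θ)`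
exactly what `w` contributes to `nm_R(C'·θ)` (its arguments are normalized from the same
instances), or a subterm of some `xσ`. All subterms of `xσ` together contribute at most
`rm_R(xσθ) = rm_R(xθ)`, the contribution of `x`: for a terminating left-reduced `R` there are no
critical pairs, so `rm_R(t)` does not depend on the normalization strategy, and normalizing
innermost first collects the redexes of all subterms. Hence `nm_R(C'σ·θ)` is a submultiset of
`nm_R(C'·θ)`, which is one of `nm_R(C' ∨ s ≉ s'·θ)`. If it is a proper one, the premise is larger
in the first component; otherwise the ground instances `C'θ ≺_C C'θ ∨ sθ ≉ s'θ` decide.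
-/

namespace Trm

@[induction_eliminator]
theorem induction {motive : Trm F V → Prop} (var : ∀ x, motive (.var x))
    (app : ∀ f ts, (∀ t ∈ ts, motive t) → motive (.app f ts)) : ∀ t, motive t
  | .var x => var x
  | .app f ts => app f ts fun t _ => induction var app t

@[simp]
theorem subst_var (θ : V → Trm F V) (x : V) : (var x : Trm F V).subst θ = θ x := by
  rw [subst]

@[simp]
theorem subst_app (θ : V → Trm F V) (f : F) (ts : List (Trm F V)) :
    (app f ts).subst θ = app f (ts.map (subst θ)) := by
  rw [subst]
  simp

theorem subst_subst (σ θ : V → Trm F V) (t : Trm F V) :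
    (t.subst σ).subst θ = t.subst fun x => (σ x).subst θ := by
  induction t with
  | var x => simp
  | app f ts ih => simpa using List.map_congr_left ih

theorem subst_subst_of_comp {σ θ : V → Trm F V} (hσθ : ∀ x, (σ x).subst θ = θ x)
    (t : Trm F V) : (t.subst σ).subst θ = t.subst θ := by
  rw [subst_subst]
  exact congrArg (subst · t) (funext hσθ)

theorem subterms_var (x : V) : (var x : Trm F V).subterms = {var x} := by
  rw [subterms]

theorem subterms_app (f : F) (ts : List (Trm F V)) :
    (app f ts).subterms = insert (app f ts) ((ts.map subterms).foldr (· ∪ ·) ∅) := by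
  rw [subterms]
  simp

theorem mem_subterms_app {f : F} {ts : List (Trm F V)} {v : Trm F V} :
    v ∈ (app f ts).subterms ↔ v = app f ts ∨ ∃ t ∈ ts, v ∈ t.subterms := by
  have key : ∀ L : List (Finset (Trm F V)), v ∈ L.foldr (· ∪ ·) ∅ ↔ ∃ s ∈ L, v ∈ s := by
    intro L; induction L <;> simp [*]
  simp [subterms_app, key]

theorem mem_subterms_self (t : Trm F V) : t ∈ t.subterms := by
  cases t with
  | var x => simp [subterms_var]
  | app f ts => simp [mem_subterms_app]

/-- The subterms of `tσ` are the union of `instSubterms σ w` over the subterms `w` of `t`. -/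
def instSubterms (σ : V → Trm F V) : Trm F V → Finset (Trm F V)
  | var x => (σ x).subterms
  | w@(app _ _) => {w.subst σ}

theorem exists_mem_instSubterms {σ : V → Trm F V} {t v : Trm F V}
    (hv : v ∈ (t.subst σ).subterms) : ∃ w ∈ t.subterms, v ∈ instSubterms σ w := by
  induction t with
  | var x => exact ⟨var x, by simp [subterms_var], by simpa [instSubterms] using hv⟩
  | app f ts ih =>
    rw [subst_app, mem_subterms_app] at hv
    rcases hv with rfl | ⟨_, ht', hvt⟩
    · exact ⟨app f ts, mem_subterms_self _, by simp [instSubterms]⟩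
    · obtain ⟨t, ht, rfl⟩ := List.mem_map.1 ht'
      obtain ⟨w, hw, hvw⟩ := ih t ht hvt
      exact ⟨w, mem_subterms_app.2 (Or.inr ⟨t, ht, hw⟩), hvw⟩

end Trm

theorem Clause.subst_subst_of_comp {σ θ : V → Trm F V} (hσθ : ∀ x, (σ x).subst θ = θ x)
    (C : Clause F V) : Clause.subst θ (Clause.subst σ C) = Clause.subst θ C := by
  refine (Multiset.map_map _ _ _).trans (Multiset.map_congr rfl fun L _ => ?_)
  cases L <;> simp [Lit.subst, Trm.subst_subst_of_comp hσθ]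

theorem List.append_cons_eq_append_cons {α : Type} {l l' r r' : List α} {a a' : α}
    (h : l ++ a :: r = l' ++ a' :: r') :
    (l = l' ∧ a = a' ∧ r = r') ∨
      (∃ m, l' = l ++ a :: m ∧ r = m ++ a' :: r') ∨
      (∃ m, l = l' ++ a' :: m ∧ r' = m ++ a :: r) := by
  rcases List.append_eq_append_iff.1 h with ⟨m, rfl, hm⟩ | ⟨m, rfl, hm⟩
  · cases m with
    | nil => simp_all
    | cons b m =>
      simp only [List.cons_append, List.cons.injEq] at hm
      exact Or.inr (Or.inl ⟨m, by rw [hm.1], hm.2⟩)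
  · cases m with
    | nil => simp_all
    | cons b m =>
      simp only [List.cons_append, List.cons.injEq] at hm
      exact Or.inr (Or.inr ⟨m, by rw [hm.1], hm.2⟩)

section Rewriting

variable {R : Set (Trm F V × Trm F V)} {s t u : Trm F V} {b : Bool}

theorem RewAt.mono {R' : Set (Trm F V × Trm F V)} (hRR' : R ⊆ R') (h : RewAt R s t u b) :
    RewAt R' s t u b := by
  induction h with
  | root hu => exact .root (hRR' hu)
  | congr _ ih => exact .congr ih

theorem RewAt.exists_rule (h : RewAt R s t u b) : ∃ v, (u, v) ∈ R ∧ RewAt {(u, v)} s t u b := by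
  induction h with
  | root hu => exact ⟨_, hu, .root rfl⟩
  | congr _ ih =>
    obtain ⟨v, hv, h⟩ := ih
    exact ⟨v, hv, .congr h⟩

theorem RewAt.sizeOf_le (h : RewAt R s t u b) : sizeOf u ≤ sizeOf s := by
  induction h with
  | root => exact le_rfl
  | @congr t _ _ _ f l r _ ih =>
    have := List.sizeOf_lt_of_mem (show t ∈ l ++ t :: r by simp)
    simp only [Trm.app.sizeOf_spec]
    omega

theorem RewAt.root_or_congr (h : RewAt R s t u b) :
    (s = u ∧ (u, t) ∈ R) ∨
      ∃ f l r a a' b', s = .app f (l ++ a :: r) ∧ t = .app f (l ++ a' :: r) ∧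
        RewAt R a a' u b' := by
  cases h with
  | root hu => exact Or.inl ⟨rfl, hu⟩
  | congr h => exact Or.inr ⟨_, _, _, _, _, _, rfl, rfl, h⟩

theorem RewAt.commute_args {a a₁ c c₁ u₁ u₂ : Trm F V} {b₁ b₂ : Bool}
    (ha : RewAt R a a₁ u₁ b₁) (hc : RewAt R c c₁ u₂ b₂) (f : F) (l m r : List (Trm F V)) :
    RewAt R (.app f (l ++ a₁ :: (m ++ c :: r))) (.app f (l ++ a₁ :: (m ++ c₁ :: r))) u₂ false ∧
      RewAt R (.app f (l ++ a :: (m ++ c₁ :: r))) (.app f (l ++ a₁ :: (m ++ c₁ :: r)))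
        u₁ false := by
  have e : ∀ x y : Trm F V, l ++ x :: (m ++ y :: r) = (l ++ x :: m) ++ y :: r := by simp
  exact ⟨e a₁ c ▸ e a₁ c₁ ▸ .congr hc, .congr ha⟩

theorem LeftReduced.rhs_unique (hR : LeftReduced R) {v₁ v₂ : Trm F V}
    (h₁ : (u, v₁) ∈ R) (h₂ : (u, v₂) ∈ R) : v₁ = v₂ := by
  by_contra hne
  exact hR _ h₁ v₂ ⟨u, true, .root ⟨h₂, fun h => hne (congrArg Prod.snd h).symm⟩⟩

theorem LeftReduced.not_rewAt_arg (hR : LeftReduced R) {f : F} {l r : List (Trm F V)}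
    {a a' v : Trm F V} (hu : (.app f (l ++ a :: r), v) ∈ R) (ha : RewAt R a a' u b) : False := by
  obtain ⟨v', hv', ha'⟩ := ha.exists_rule
  have hlt : sizeOf a < sizeOf (Trm.app f (l ++ a :: r)) := by
    have := List.sizeOf_lt_of_mem (show a ∈ l ++ a :: r by simp)
    simp only [Trm.app.sizeOf_spec]
    omega
  have hne : (u, v') ≠ (.app f (l ++ a :: r), v) := fun h => by
    have := ha.sizeOf_le
    rw [(Prod.mk.inj h).1] at this
    omega
  have hsub : ({(u, v')} : Set (Trm F V × Trm F V)) ⊆ R \ {(.app f (l ++ a :: r), v)} := by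
    simpa using And.intro hv' hne
  exact hR _ hu _ ⟨u, false, .congr (ha'.mono hsub)⟩

theorem LeftReduced.rewAt_diamond (hR : LeftReduced R) {t₁ t₂ u₁ u₂ : Trm F V} {b₁ b₂ : Bool}
    (h₁ : RewAt R t t₁ u₁ b₁) (h₂ : RewAt R t t₂ u₂ b₂) :
    (t₁ = t₂ ∧ u₁ = u₂) ∨ ∃ t₃ c₁ c₂, RewAt R t₁ t₃ u₂ c₁ ∧ RewAt R t₂ t₃ u₁ c₂ := by
  induction h₁ generalizing t₂ u₂ b₂ with
  | root hu₁ =>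
    rcases h₂.root_or_congr with ⟨rfl, hu₂⟩ | ⟨f, l, r, a, a', _, rfl, -, ha⟩
    · exact Or.inl ⟨hR.rhs_unique hu₁ hu₂, rfl⟩
    · exact (hR.not_rewAt_arg hu₁ ha).elim
  | @congr a a₁ _ _ f l r ha₁ ih =>
    rcases h₂.root_or_congr with ⟨htop, hu₂⟩ | ⟨f', l', r', a', a₂, _, htop, rfl, ha₂⟩
    · exact (hR.not_rewAt_arg (htop ▸ hu₂) ha₁).elim
    obtain ⟨rfl, hargs⟩ := Trm.app.inj htop
    rcases List.append_cons_eq_append_cons hargs with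
      ⟨rfl, rfl, rfl⟩ | ⟨m, rfl, rfl⟩ | ⟨m, rfl, rfl⟩
    · rcases ih ha₂ with ⟨rfl, rfl⟩ | ⟨a₃, c₁, c₂, hc₁, hc₂⟩
      · exact Or.inl ⟨rfl, rfl⟩
      · exact Or.inr ⟨_, false, false, .congr hc₁, .congr hc₂⟩
    · obtain ⟨h₁₃, h₂₃⟩ := ha₁.commute_args ha₂ f l m r'
      exact Or.inr ⟨_, false, false, h₁₃, by simpa using h₂₃⟩
    · obtain ⟨h₂₃, h₁₃⟩ := ha₂.commute_args ha₁ f l' m r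
      exact Or.inr ⟨_, false, false, by simpa using h₁₃, h₂₃⟩

end Rewriting

section Normalization

variable {O : ReductionOrdering F V} {R : Set (Trm F V × Trm F V)}
  {s t t' : Trm F V} {S S' : Multiset (Multiset (Trm F V))}

theorem GoodRS.gt_of_step (hR : GoodRS O R) (h : Step R s t) : O.gt s t := by
  obtain ⟨u, b, h⟩ := h
  induction h with
  | root hu => exact (hR.2 _ hu).2.2
  | congr _ ih => exact O.compat_ctx _ _ _ ih

/-- `rm_R` along an arbitrary, not necessarily normalizing, rewrite sequence. -/
inductive RSeq (R : Set (Trm F V × Trm F V)) :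
    Trm F V → Trm F V → Multiset (Multiset (Trm F V)) → Prop
  | refl (t : Trm F V) : RSeq R t t 0
  | step {t t' t'' u : Trm F V} {b : Bool} {S : Multiset (Multiset (Trm F V))} :
      RewAt R t t' u b → RSeq R t' t'' S → RSeq R t t'' (({u, u} : Multiset (Trm F V)) ::ₘ S)

theorem RSeq.append (h : RSeq R s t S) (h' : RSeq R t t' S') : RSeq R s t' (S + S') := by
  induction h with
  | refl => simpa using h'
  | step hr _ ih => simpa using RSeq.step hr (ih h')

theorem RSeq.congr {a a' : Trm F V} (f : F) (l r : List (Trm F V)) (h : RSeq R a a' S) :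
    RSeq R (.app f (l ++ a :: r)) (.app f (l ++ a' :: r)) S := by
  induction h with
  | refl => exact .refl _
  | step hr _ ih => exact .step (.congr hr) ih

theorem RSeq.reflTransGen (h : RSeq R s t S) : Relation.ReflTransGen (Step R) s t := by
  induction h with
  | refl => exact .refl
  | step hr _ ih => exact .head ⟨_, _, hr⟩ ih

theorem RSeq.exists_of_reflTransGen (h : Relation.ReflTransGen (Step R) s t) :
    ∃ S, RSeq R s t S := by
  induction h using Relation.ReflTransGen.head_induction_on with
  | refl => exact ⟨0, .refl _⟩
  | head hst _ ih =>
    obtain ⟨u, b, hr⟩ := hst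
    obtain ⟨S, h⟩ := ih
    exact ⟨_, .step hr h⟩

theorem RMn.iff_exists_rseq : RMn R t S ↔ ∃ t', RSeq R t t' S ∧ Irred R t' := by
  constructor
  · intro h
    induction h with
    | irred hi => exact ⟨_, .refl _, hi⟩
    | step hr _ ih =>
      obtain ⟨t', h, hi⟩ := ih
      exact ⟨t', .step hr h, hi⟩
  · rintro ⟨t', h, hi⟩
    induction h with
    | refl => exact .irred hi
    | step hr _ ih => exact .step hr (ih hi)

theorem GoodRS.exists_rseq_irred (hR : GoodRS O R) (t : Trm F V) :
    ∃ t' S, RSeq R t t' S ∧ Irred R t' := by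
  induction t using WellFounded.induction O.wf with
  | _ t ih =>
    by_cases hi : Irred R t
    · exact ⟨t, 0, .refl t, hi⟩
    · obtain ⟨t₁, u, b, hr⟩ := not_forall_not.1 hi
      obtain ⟨t', S, h, hi'⟩ := ih t₁ (hR.gt_of_step ⟨u, b, hr⟩)
      exact ⟨t', _, .step hr h, hi'⟩

theorem GoodRS.rseq_irred_unique (hR : GoodRS O R) {t₁ t₂ : Trm F V}
    {S₁ S₂ : Multiset (Multiset (Trm F V))} (h₁ : RSeq R t t₁ S₁) (hi₁ : Irred R t₁)
    (h₂ : RSeq R t t₂ S₂) (hi₂ : Irred R t₂) : t₁ = t₂ ∧ S₁ = S₂ := by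
  induction t using WellFounded.induction O.wf generalizing t₁ t₂ S₁ S₂ with
  | _ t ih =>
    cases h₁ with
    | refl =>
      cases h₂ with
      | refl => exact ⟨rfl, rfl⟩
      | step hr _ => exact (hi₁ _ ⟨_, _, hr⟩).elim
    | step hr₁ hs₁ =>
      cases h₂ with
      | refl => exact (hi₂ _ ⟨_, _, hr₁⟩).elim
      | step hr₂ hs₂ =>
        have hgt₁ := hR.gt_of_step ⟨_, _, hr₁⟩
        have hgt₂ := hR.gt_of_step ⟨_, _, hr₂⟩
        rcases hR.1.rewAt_diamond hr₁ hr₂ with ⟨rfl, rfl⟩ | ⟨t₃, c₁, c₂, hc₁, hc₂⟩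
        · obtain ⟨rfl, rfl⟩ := ih _ hgt₁ hs₁ hi₁ hs₂ hi₂
          exact ⟨rfl, rfl⟩
        · obtain ⟨t₄, S₄, hs₄, hi₄⟩ := hR.exists_rseq_irred t₃
          obtain ⟨rfl, rfl⟩ := ih _ hgt₁ hs₁ hi₁ (.step hc₁ hs₄) hi₄
          obtain ⟨rfl, rfl⟩ := ih _ hgt₂ hs₂ hi₂ (.step hc₂ hs₄) hi₄
          exact ⟨rfl, Multiset.cons_swap _ _ _⟩

theorem GoodRS.nf_eq (hR : GoodRS O R) (h : RSeq R t t' S) (hi : Irred R t') : nf R t = t' := by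
  have hex : ∃ t', ReachNF R t t' := ⟨t', h.reflTransGen, hi⟩
  rw [nf, dif_pos hex]
  obtain ⟨hr, hi'⟩ := hex.choose_spec
  obtain ⟨S', h'⟩ := RSeq.exists_of_reflTransGen hr
  exact (hR.rseq_irred_unique h' hi' h hi).1

theorem GoodRS.rmN_eq (hR : GoodRS O R) (h : RSeq R t t' S) (hi : Irred R t') : rmN R t = S := by
  have hex : ∃ S, RMn R t S := ⟨S, RMn.iff_exists_rseq.2 ⟨t', h, hi⟩⟩
  rw [rmN, dif_pos hex]
  obtain ⟨t'', h', hi'⟩ := RMn.iff_exists_rseq.1 hex.choose_spec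
  exact (hR.rseq_irred_unique h' hi' h hi).2

theorem GoodRS.rseq_nf (hR : GoodRS O R) (t : Trm F V) : RSeq R t (nf R t) (rmN R t) := by
  obtain ⟨t', S, h, hi⟩ := hR.exists_rseq_irred t
  rwa [hR.nf_eq h hi, hR.rmN_eq h hi]

theorem GoodRS.rseq_args (hR : GoodRS O R) (f : F) (l gs : List (Trm F V)) :
    RSeq R (.app f (l ++ gs)) (.app f (l ++ gs.map (nf R))) (gs.map (rmN R)).sum := by
  induction gs generalizing l with
  | nil => simpa using RSeq.refl _
  | cons g gs ih =>
    have h := ih (l ++ [nf R g])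
    simp only [List.append_assoc, List.singleton_append] at h
    simpa using (RSeq.congr f l gs (hR.rseq_nf g)).append h

theorem GoodRS.rmN_app (hR : GoodRS O R) (f : F) (gs : List (Trm F V)) :
    rmN R (.app f gs) = (gs.map (rmN R)).sum + rmN R (.app f (gs.map (nf R))) := by
  obtain ⟨t', S, h, hi⟩ := hR.exists_rseq_irred (.app f (gs.map (nf R)))
  have hargs : RSeq R (.app f gs) (.app f (gs.map (nf R))) (gs.map (rmN R)).sum := by
    simpa using hR.rseq_args f [] gs
  rw [hR.rmN_eq h hi]
  exact hR.rmN_eq (hargs.append h) hi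

end Normalization

section CanonicallyOrdered

variable {α M : Type} [DecidableEq α] [AddCommMonoid M] [PartialOrder M]
  [CanonicallyOrderedAdd M]

theorem Finset.sum_union_le (s t : Finset α) (f : α → M) :
    ∑ x ∈ s ∪ t, f x ≤ ∑ x ∈ s, f x + ∑ x ∈ t, f x := by
  rw [← Finset.sum_union_inter]
  exact le_self_add

theorem Finset.sum_insert_le (a : α) (s : Finset α) (f : α → M) :
    ∑ x ∈ insert a s, f x ≤ f a + ∑ x ∈ s, f x := by
  simpa [← Finset.insert_eq] using Finset.sum_union_le {a} s f

theorem List.sum_foldr_union_le [IsOrderedAddMonoid M] (L : List (Finset α)) (f : α → M) :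
    ∑ x ∈ L.foldr (· ∪ ·) ∅, f x ≤ (L.map fun s => ∑ x ∈ s, f x).sum := by
  induction L with
  | nil => simp
  | cons s L ih =>
    simpa using (Finset.sum_union_le s _ f).trans (add_le_add_right ih _)

end CanonicallyOrdered

theorem multGT_of_lt {α : Type} {r : α → α → Prop} {M N : Multiset α} (h : M < N) :
    MultGT r N M := by
  obtain ⟨X, rfl⟩ := Multiset.le_iff_exists_add.1 h.le
  exact ⟨X, 0, M, rfl, by simp, fun hX => h.ne (by simp [hX]), by simp⟩

theorem mem_ssN {C : Clause F V} {v : Trm F V} : v ∈ ssN C ↔ ∃ L ∈ C, v ∈ L.negSubs := by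
  simp [ssN]

theorem ssN_subst_subset (σ : V → Trm F V) (C : Clause F V) :
    ssN (Clause.subst σ C) ⊆ (ssN C).sup (Trm.instSubterms σ) := by
  intro v hv
  obtain ⟨_, hLσ, hv⟩ := mem_ssN.1 hv
  obtain ⟨L, hL, rfl⟩ := Multiset.mem_map.1 hLσ
  cases L with
  | pos => simp [Lit.subst, Lit.negSubs] at hv
  | neg a a' =>
    simp only [Lit.subst, Lit.negSubs, Finset.mem_union] at hv
    rw [Finset.mem_sup]
    rcases hv with hv | hv <;> obtain ⟨w, hw, hvw⟩ := Trm.exists_mem_instSubterms hv <;>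
      exact ⟨w, mem_ssN.2 ⟨_, hL, by simp [Lit.negSubs, hw]⟩, hvw⟩

theorem tsN_subst_subset (σ : V → Trm F V) (C : Clause F V) :
    tsN (Clause.subst σ C) ⊆ (tsN C).image (Trm.subst σ) := by
  intro v hv
  obtain ⟨_, hLσ, hv⟩ := Finset.mem_sup.1 hv
  obtain ⟨L, hL, rfl⟩ := Multiset.mem_map.1 (Multiset.mem_toFinset.1 hLσ)
  cases L with
  | pos => simp [Lit.subst, Lit.negTops] at hv
  | neg a a' =>
    simp only [Lit.subst, Lit.negTops, Finset.mem_insert, Finset.mem_singleton] at hv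
    rcases hv with rfl | rfl <;>
      exact Finset.mem_image_of_mem _
        (Finset.mem_sup.2 ⟨_, Multiset.mem_toFinset.2 hL, by simp [Lit.negTops]⟩)

theorem nmN_mono (R : Set (Trm F V × Trm F V)) (θ : V → Trm F V) {C D : Clause F V}
    (h : C ≤ D) : nmN R C θ ≤ nmN R D θ := by
  have hsup {g : Lit F V → Finset (Trm F V)} : C.toFinset.sup g ≤ D.toFinset.sup g :=
    Finset.sup_mono (Multiset.toFinset_subset.2 (Multiset.subset_of_le h))
  obtain ⟨E, rfl⟩ := Multiset.le_iff_exists_add.1 h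
  unfold nmN
  refine add_le_add (add_le_add (Finset.sum_le_sum_of_subset hsup)
    (Finset.sum_le_sum_of_subset hsup)) ?_
  simp

section NormalizationMultiset

variable {O : ReductionOrdering F V} {R : Set (Trm F V × Trm F V)} {σ θ : V → Trm F V}

theorem GoodRS.sum_subterms_nmNElt_le (hR : GoodRS O R) (t : Trm F V) :
    ∑ v ∈ t.subterms, nmNElt R θ v ≤ rmN R (t.subst θ) := by
  induction t with
  | var x => simp [Trm.subterms_var, nmNElt]
  | app f ts ih =>
    have hargs : (ts.map fun t => ∑ v ∈ t.subterms, nmNElt R θ v).sum ≤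
        (ts.map fun t => rmN R (t.subst θ)).sum :=
      List.sum_le_sum fun t ht => ih t ht
    calc ∑ v ∈ (Trm.app f ts).subterms, nmNElt R θ v
        ≤ nmNElt R θ (.app f ts) + ∑ v ∈ (ts.map Trm.subterms).foldr (· ∪ ·) ∅, nmNElt R θ v :=
          Trm.subterms_app f ts ▸ Finset.sum_insert_le _ _ _
      _ ≤ nmNElt R θ (.app f ts) + (ts.map fun t => rmN R (t.subst θ)).sum := by
          grw [List.sum_foldr_union_le, ← hargs]
          simp [Function.comp_def]
      _ = rmN R ((Trm.app f ts).subst θ) := by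
          rw [Trm.subst_app, hR.rmN_app, add_comm, List.map_map, List.map_map, nmNElt]
          rfl

theorem nmNElt_subst_app (hσθ : ∀ x, (σ x).subst θ = θ x) (f : F) (ts : List (Trm F V)) :
    nmNElt R θ ((Trm.app f ts).subst σ) = nmNElt R θ (.app f ts) := by
  simp [nmNElt, Function.comp_def, Trm.subst_subst_of_comp hσθ]

theorem GoodRS.sum_instSubterms_le (hR : GoodRS O R) (hσθ : ∀ x, (σ x).subst θ = θ x)
    (w : Trm F V) : ∑ v ∈ w.instSubterms σ, nmNElt R θ v ≤ nmNElt R θ w := by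
  cases w with
  | var x => simpa [Trm.instSubterms, nmNElt, hσθ] using hR.sum_subterms_nmNElt_le (θ := θ) (σ x)
  | app f ts => rw [Trm.instSubterms, Finset.sum_singleton, nmNElt_subst_app hσθ]

theorem GoodRS.nmN_subst_le (hR : GoodRS O R) (hσθ : ∀ x, (σ x).subst θ = θ x)
    (C : Clause F V) : nmN R (Clause.subst σ C) θ ≤ nmN R C θ := by
  unfold nmN
  refine add_le_add (add_le_add ?_ ?_) ?_
  · calc ∑ v ∈ ssN (Clause.subst σ C), nmNElt R θ v
        ≤ ∑ v ∈ (ssN C).sup (Trm.instSubterms σ), nmNElt R θ v :=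
          Finset.sum_le_sum_of_subset (ssN_subst_subset σ C)
      _ ≤ ∑ w ∈ ssN C, ∑ v ∈ w.instSubterms σ, nmNElt R θ v :=
          Finset.apply_sup_le_sum (f := fun s => ∑ v ∈ s, nmNElt R θ v)
            (by simp [Finset.bot_eq_empty]) (Finset.sum_union_le _ _ _) _
      _ ≤ ∑ w ∈ ssN C, nmNElt R θ w := Finset.sum_le_sum fun w _ => hR.sum_instSubterms_le hσθ w
  · refine (Finset.sum_le_sum_of_subset (tsN_subst_subset σ C)).trans ?_
    refine (Finset.sum_image_le_of_nonneg fun _ _ => zero_le).trans_eq ?_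
    exact Finset.sum_congr rfl fun t _ => by rw [Trm.subst_subst_of_comp hσθ]
  · refine (congrArg Multiset.sum ((Multiset.map_map _ _ _).trans
      (Multiset.map_congr rfl fun L _ => ?_))).le
    cases L <;> simp [Lit.subst, Trm.subst_subst_of_comp hσθ]

end NormalizationMultiset

theorem eqres_reduces_nonhorn_general {F V : Type} (O : ReductionOrdering F V) (T : TieBreak F V)
    (C' : Clause F V) (s s' : Trm F V) (σ θ : V → Trm F V)
    (heq : s.subst θ = s'.subst θ)
    (hmgu : IsMGU σ s s') :
    ∀ R : Set (Trm F V × Trm F V), GoodRS O R →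
      cloGTN O T R (C' + {Lit.neg s s'}, θ) (Clause.subst σ C', θ) := by
  intro R hR
  have hσθ : ∀ x, (σ x).subst θ = θ x := hmgu.2 θ heq
  have hnm : nmN R (Clause.subst σ C') θ ≤ nmN R (C' + {Lit.neg s s'}) θ :=
    (hR.nmN_subst_le hσθ C').trans (nmN_mono R θ (Multiset.le_add_right _ _))
  rcases hnm.lt_or_eq with hlt | hnm_eq
  · exact Or.inl (multGT_of_lt hlt)
  · refine Or.inr (Or.inl ⟨hnm_eq.symm, multGT_of_lt ?_⟩)
    change Clause.subst θ (Clause.subst σ C') < Clause.subst θ (C' + {Lit.neg s s'})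
    rw [Clause.subst_subst_of_comp hσθ, Clause.subst, Clause.subst, Multiset.map_add]
    exact lt_add_of_pos_right _ (by simp [pos_iff_ne_zero])

/-- Lemma 13, non-Horn case: the conclusion `(C'σ·θ)` of a ground
Equality Resolution inference is smaller than its premise `(C' ∨ s ≉ s' · θ)` in the
non-Horn `R`-normalization closure ordering, for every left-reduced ground rewrite
system `R` contained in `≻`. -/
theorem eqres_reduces_nonhorn {F V : Type} (O : ReductionOrdering F V) (T : TieBreak F V)
    (C' : Clause F V) (s s' : Trm F V) (σ θ : V → Trm F V)
    (hg : Closure.IsGround (C' + {Lit.neg s s'}, θ))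
    (heq : s.subst θ = s'.subst θ)
    (hmgu : IsMGU σ s s')
    (hmax : MaxIn O (Lit.subst θ (Lit.neg s s')) (Clause.subst θ C')) :
    ∀ R : Set (Trm F V × Trm F V), GoodRS O R →
      cloGTN O T R (C' + {Lit.neg s s'}, θ) (Clause.subst σ C', θ) :=
  eqres_reduces_nonhorn_general O T C' s s' σ θ heq hmgu
end
end

section
/- (Non-Horn case) Let ι be a ground Equality Factoring inference with premise (C' ∨ r ≈ r' ∨ s ≈ s' · θ), where sθ = rθ, σ = mgu(s,r), sθ ≻ s'θ, and (s ≈ s')θ is maximal in (C' ∨ r ≈ r' ∨ s ≈ s')θ, and conclusion ((C' ∨ s' ≉ r' ∨ r ≈ r')σ · θ). Then for every left-reduced ground rewrite system R contained in ≻, the conclusion is smaller than the premise in the non-Horn R-normalization closure ordering: concl(ι) ≪_R (C' ∨ r ≈ r' ∨ s ≈ s' · θ). -/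
/- Common infrastructure: first-order terms, clauses, ground rewrite systems,
   reduction orderings, the (Horn and non-Horn) R-normalization closure orderings,
   the Ground Closure (Horn) Superposition Calculus and its redundancy criterion,
   and the candidate interpretation construction, following Waldmann,
   "On the (In-)Completeness of Destructive Equality Resolution in the
   Superposition Calculus". -/

set_option autoImplicit false
set_option maxHeartbeats 1000000

noncomputable section

variable {F V : Type}

section EqFactAux
variable {F V : Type}

private theorem noDesc {α : Sort*} {r : α → α → Prop} (wf : WellFounded r) (g : ℕ → α)
    (h : ∀ n, r (g (n+1)) (g n)) : False := by
  have key : ∀ a, Acc r a → ∀ n, g n = a → False := by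
    intro a ha
    induction ha with
    | intro a _ ih => intro n e; exact ih (g (n+1)) (e ▸ h n) (n+1) rfl
  exact key (g 0) (wf.apply _) 0 rfl

private theorem subst_app (θ : V → Trm F V) (f : F) (ts : List (Trm F V)) :
    Trm.subst θ (Trm.app f ts) = Trm.app f (ts.map (Trm.subst θ)) := by
  simp [Trm.subst]

private theorem mem_foldr_union {α : Type} [DecidableEq α] (L : List (Finset α)) (x : α) :
    x ∈ L.foldr (· ∪ ·) ∅ ↔ ∃ s ∈ L, x ∈ s := by
  induction L with
  | nil => simp
  | cons a L ih => simp [ih]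

private theorem self_mem_subterms (t : Trm F V) : t ∈ t.subterms := by
  cases t with
  | var x => simp [Trm.subterms]
  | app f ts => rw [Trm.subterms]; exact Finset.mem_insert_self _ _

private theorem subterms_app_mem {f : F} {ts : List (Trm F V)} {x : Trm F V} :
    x ∈ (Trm.app f ts).subterms ↔ x = Trm.app f ts ∨ ∃ a ∈ ts, x ∈ a.subterms := by
  rw [Trm.subterms]
  simp only [Finset.mem_insert, mem_foldr_union, List.mem_map, List.mem_attach]
  constructor
  · rintro (h | ⟨s, ⟨⟨a, ha⟩, -, rfl⟩, hx⟩)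
    · exact Or.inl h
    · exact Or.inr ⟨a, ha, hx⟩
  · rintro (h | ⟨a, ha, hx⟩)
    · exact Or.inl h
    · exact Or.inr ⟨a.subterms, ⟨⟨a, ha⟩, trivial, rfl⟩, hx⟩

private theorem subterms_subset_of_mem {a : Trm F V} {ts : List (Trm F V)} (f : F)
    (h : a ∈ ts) : a.subterms ⊆ (Trm.app f ts).subterms := by
  intro x hx; exact subterms_app_mem.2 (Or.inr ⟨a, h, hx⟩)

private theorem subst_subterms (θ : V → Trm F V) (w : Trm F V) :
    ∀ t ∈ w.subterms, t.subst θ ∈ (w.subst θ).subterms := by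
  induction w using Trm.subterms.induct with
  | case1 x =>
    intro t ht
    simp only [Trm.subterms, Finset.mem_singleton] at ht
    subst ht; exact self_mem_subterms _
  | case2 f ts ih =>
    intro t ht
    rcases subterms_app_mem.1 ht with rfl | ⟨a, ha, hx⟩
    · exact self_mem_subterms _
    · have := ih ⟨a, ha⟩ t hx
      rw [subst_app]
      exact subterms_subset_of_mem f (List.mem_map_of_mem ha) this

private theorem ground_of_mem_subterms {w : Trm F V} (hw : w.IsGround) :
    ∀ t ∈ w.subterms, t.IsGround := by
  induction w using Trm.subterms.induct with
  | case1 x => cases hw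
  | case2 f ts ih =>
    intro t ht
    rcases subterms_app_mem.1 ht with rfl | ⟨a, ha, hx⟩
    · exact hw
    · cases hw with
      | app h => exact ih ⟨a, ha⟩ (h a ha) t hx

private theorem mem_ctx_of_mem_subterms {u w : Trm F V} (h : u ∈ w.subterms) :
    ∃ C : Ctx F V, C.fill u = w := by
  induction w using Trm.subterms.induct with
  | case1 x =>
    simp only [Trm.subterms, Finset.mem_singleton] at h
    exact ⟨Ctx.hole, h⟩
  | case2 f ts ih =>
    rcases subterms_app_mem.1 h with rfl | ⟨a, ha, hx⟩
    · exact ⟨Ctx.hole, rfl⟩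
    · obtain ⟨C, hC⟩ := ih ⟨a, ha⟩ hx
      obtain ⟨l, r, rfl⟩ := List.append_of_mem ha
      exact ⟨Ctx.app f l C r, by simp [Ctx.fill, hC]⟩

variable {O : ReductionOrdering F V} {R : Set (Trm F V × Trm F V)}

private theorem gt_irrefl' (O : ReductionOrdering F V) (a : Trm F V) : ¬ O.gt a a := by
  intro h; exact noDesc O.wf (fun _ => a) (fun _ => h)

private theorem fill_gt {a b : Trm F V} (h : O.gt a b) :
    ∀ C : Ctx F V, O.gt (C.fill a) (C.fill b) := by
  intro C
  induction C with
  | hole => exact h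
  | app f l c r ih => exact O.compat_ctx f l r ih

private theorem not_gt_fill {u w : Trm F V} (C : Ctx F V) (hC : C.fill u = w) :
    ¬ O.gt u w := by
  intro h
  have step : ∀ n, O.gt ((fun t => C.fill t)^[n] u) ((fun t => C.fill t)^[n+1] u) := by
    intro n
    induction n with
    | zero => simpa [hC] using h
    | succ n ih =>
      rw [Function.iterate_succ_apply', Function.iterate_succ_apply']
      exact fill_gt ih C
  exact noDesc O.wf (fun n => (fun t => C.fill t)^[n] u) (fun n => step n)

/-- Ground subterm property. -/
private theorem gt_of_subterm {t u : Trm F V} (ht : t.IsGround) (hu : u.IsGround)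
    (hmem : u ∈ t.subterms) : u = t ∨ O.gt t u := by
  by_cases he : u = t
  · exact Or.inl he
  · rcases O.total_ground hu ht he with h | h
    · obtain ⟨C, hC⟩ := mem_ctx_of_mem_subterms hmem
      exact absurd h (not_gt_fill C hC)
    · exact Or.inr h

private theorem rewAt_gt (hR : GoodRS O R) {t t' u : Trm F V} {b : Bool}
    (h : RewAt R t t' u b) : O.gt t t' := by
  induction h with
  | root hm => exact (hR.2 _ hm).2.2
  | congr _ ih => exact O.compat_ctx _ _ _ ih

private theorem rewAt_lhs_mem {t t' u : Trm F V} {b : Bool}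
    (h : RewAt R t t' u b) : u ∈ t.subterms := by
  induction h with
  | root _ => exact self_mem_subterms _
  | @congr t t' u b f l r _ ih =>
    exact subterms_subset_of_mem f (by simp) ih

private theorem rewAt_lhs_ground (hR : GoodRS O R) {t t' u : Trm F V} {b : Bool}
    (h : RewAt R t t' u b) : u.IsGround := by
  induction h with
  | root hm => exact (hR.2 _ hm).1
  | congr _ ih => exact ih

private theorem rewAt_ground (hR : GoodRS O R) {t t' u : Trm F V} {b : Bool}
    (h : RewAt R t t' u b) (ht : t.IsGround) : t'.IsGround := by
  induction h with
  | root hm => exact (hR.2 _ hm).2.1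
  | @congr t t' u b f l r h ih =>
    cases ht with
    | app hall =>
      refine Trm.IsGround.app ?_
      intro x hx
      rcases List.mem_append.1 hx with hx | hx
      · exact hall x (List.mem_append.2 (Or.inl hx))
      · rcases List.mem_cons.1 hx with rfl | hx
        · exact ih (hall t (by simp))
        · exact hall x (by simp [hx])

private theorem step_gt (hR : GoodRS O R) {t t' : Trm F V} (h : Step R t t') : O.gt t t' := by
  obtain ⟨u, b, h⟩ := h; exact rewAt_gt hR h

private theorem step_ground (hR : GoodRS O R) {t t' : Trm F V} (h : Step R t t')
    (ht : t.IsGround) : t'.IsGround := by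
  obtain ⟨u, b, h⟩ := h; exact rewAt_ground hR h ht

private theorem rtg_ge (hR : GoodRS O R) {t t' : Trm F V}
    (h : Relation.ReflTransGen (Step R) t t') :
    (t' = t ∨ O.gt t t') ∧ (t.IsGround → t'.IsGround) := by
  induction h with
  | refl => exact ⟨Or.inl rfl, id⟩
  | tail hs hstep ih =>
    refine ⟨?_, fun hg => step_ground hR hstep (ih.2 hg)⟩
    rcases ih.1 with rfl | hgt
    · exact Or.inr (step_gt hR hstep)
    · exact Or.inr (O.trans hgt (step_gt hR hstep))

private theorem nf_ge (hR : GoodRS O R) (t : Trm F V) :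
    (nf R t = t ∨ O.gt t (nf R t)) ∧ (t.IsGround → (nf R t).IsGround) := by
  unfold nf
  split
  · next h => exact rtg_ge hR h.choose_spec.1
  · exact ⟨Or.inl rfl, id⟩

private theorem gtGe {a b c : Trm F V} (h : O.gt a b) (h' : c = b ∨ O.gt b c) :
    O.gt a c := h'.elim (fun e => e ▸ h) (O.trans h)

private theorem geTrans {a b c : Trm F V} (h : b = a ∨ O.gt a b) (h' : c = b ∨ O.gt b c) :
    c = a ∨ O.gt a c := by
  rcases h with rfl | h
  · exact h'
  · exact Or.inr (gtGe h h')

private theorem rmn_bound (hR : GoodRS O R) {t : Trm F V} {S : Multiset (Multiset (Trm F V))}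
    (h : RMn R t S) (ht : t.IsGround) :
    ∀ y ∈ S, ∃ u : Trm F V, y = ({u, u} : Multiset (Trm F V)) ∧ (u = t ∨ O.gt t u) := by
  induction h with
  | irred _ => intro y hy; cases hy
  | @step t t' u b S hrw _ ih =>
    intro y hy
    rcases Multiset.mem_cons.1 hy with rfl | hy
    · exact ⟨u, rfl, gt_of_subterm ht (rewAt_lhs_ground hR hrw) (rewAt_lhs_mem hrw)⟩
    · obtain ⟨w, rfl, hw⟩ := ih (rewAt_ground hR hrw ht) y hy
      exact ⟨w, rfl, Or.inr (gtGe (rewAt_gt hR hrw) hw)⟩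

private theorem rmN_bound (hR : GoodRS O R) {t : Trm F V} (ht : t.IsGround) :
    ∀ y ∈ rmN R t, ∃ u : Trm F V, y = ({u, u} : Multiset (Trm F V)) ∧ (u = t ∨ O.gt t u) := by
  unfold rmN
  split
  · next h => exact rmn_bound hR h.choose_spec ht
  · intro y hy; cases hy

private theorem app_ge_of_forall (f : F) :
    ∀ (l ts ts' : List (Trm F V)), List.Forall₂ (fun a b => b = a ∨ O.gt a b) ts ts' →
      (Trm.app f (l ++ ts') = Trm.app f (l ++ ts) ∨
        O.gt (Trm.app f (l ++ ts)) (Trm.app f (l ++ ts'))) := by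
  intro l ts ts' h
  induction h generalizing l with
  | nil => exact Or.inl rfl
  | @cons a b ts ts' hab _ ih =>
    have step1 : Trm.app f (l ++ b :: ts) = Trm.app f (l ++ a :: ts) ∨
        O.gt (Trm.app f (l ++ a :: ts)) (Trm.app f (l ++ b :: ts)) := by
      rcases hab with rfl | hab
      · exact Or.inl rfl
      · exact Or.inr (O.compat_ctx f l ts hab)
    have step2 := ih (l ++ [b])
    rw [← List.append_cons l b ts, ← List.append_cons l b ts'] at step2
    exact geTrans step1 step2

private theorem nmNElt_bound (hR : GoodRS O R) (θ : V → Trm F V) {t : Trm F V}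
    (ht : (t.subst θ).IsGround) :
    ∀ y ∈ nmNElt R θ t, ∃ u : Trm F V,
      y = ({u, u} : Multiset (Trm F V)) ∧ (u = t.subst θ ∨ O.gt (t.subst θ) u) := by
  cases t with
  | var x =>
    have hvx : (Trm.var x).subst θ = θ x := by simp [Trm.subst]
    rw [hvx] at ht ⊢
    exact rmN_bound hR ht
  | app f ts =>
    have hsub : (Trm.app f ts).subst θ = Trm.app f (ts.map (Trm.subst θ)) := subst_app θ f ts
    rw [hsub] at ht ⊢
    -- arguments are ground
    have hargs : ∀ a ∈ ts, (a.subst θ).IsGround := by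
      intro a ha
      cases ht with
      | app hall => exact hall _ (List.mem_map_of_mem ha)
    -- the normalized-argument term
    set t' : Trm F V := Trm.app f (ts.map fun a => nf R (a.subst θ)) with ht'
    have hf2 : List.Forall₂ (fun a b => b = a ∨ O.gt a b) (ts.map (Trm.subst θ))
        (ts.map fun a => nf R (a.subst θ)) := by
      rw [List.forall₂_map_right_iff, List.forall₂_map_left_iff]
      refine List.forall₂_same.2 ?_
      intro a _; exact (nf_ge hR (a.subst θ)).1
    have hge : t' = Trm.app f (ts.map (Trm.subst θ)) ∨
        O.gt (Trm.app f (ts.map (Trm.subst θ))) t' := by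
      have := app_ge_of_forall f [] _ _ hf2
      simpa only [List.nil_append, ht'] using this
    have ht'g : t'.IsGround := by
      refine Trm.IsGround.app ?_
      intro x hx
      obtain ⟨a, ha, rfl⟩ := List.mem_map.1 hx
      exact (nf_ge hR (a.subst θ)).2 (hargs a ha)
    intro y hy
    have hy' : y ∈ rmN R t' := by
      simpa [nmNElt, ht'] using hy
    obtain ⟨u, rfl, hu⟩ := rmN_bound hR ht'g y hy'
    refine ⟨u, rfl, ?_⟩
    rcases hge with e | g
    · rw [← e]; exact hu
    · exact Or.inr (gtGe g hu)

private theorem subst_subst (σ τ : V → Trm F V) (t : Trm F V) :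
    (t.subst σ).subst τ = t.subst (fun x => (σ x).subst τ) := by
  induction t using Trm.subterms.induct with
  | case1 x => simp [Trm.subst]
  | case2 f ts ih =>
    rw [subst_app, subst_app, subst_app, List.map_map]
    congr 1
    refine List.map_congr_left ?_
    intro a ha
    exact ih ⟨a, ha⟩

private theorem multGT_pair {S S' u v : Trm F V} (h1 : O.gt S u) (h2 : O.gt S v) :
    MultGT O.gt {S, S'} {u, v} := by
  refine ⟨{S, S'}, {u, v}, 0, (zero_add _).symm, (zero_add _).symm, by simp, ?_⟩
  intro y hy
  refine ⟨S, by simp, ?_⟩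
  rcases Multiset.mem_cons.1 hy with rfl | hy
  · exact h1
  · rw [Multiset.mem_singleton.1 hy]; exact h2

private theorem max_neg_lt {Sθ S'θ Aθ Bθ : Trm F V} (gS : Sθ.IsGround) (gA : Aθ.IsGround)
    (gB : Bθ.IsGround) (hS : O.gt Sθ S'θ)
    (h : ¬ MultGT O.gt ({Aθ, Aθ, Bθ, Bθ} : Multiset (Trm F V)) ({Sθ, S'θ})) :
    O.gt Sθ Aθ ∧ O.gt Sθ Bθ := by
  have hA : O.gt Sθ Aθ := by
    by_cases e : Aθ = Sθ
    · exfalso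
      refine h ⟨{Aθ, Bθ, Bθ}, {S'θ}, {Sθ}, ?_, ?_, by simp, ?_⟩
      · rw [e, Multiset.singleton_add]; simp [Multiset.insert_eq_cons]
      · rw [Multiset.singleton_add]; simp [Multiset.insert_eq_cons]
      · intro y hy
        rw [Multiset.mem_singleton.1 hy]
        exact ⟨Aθ, by simp, e ▸ hS⟩
    · rcases O.total_ground gA gS e with hAS | hSA
      · exfalso
        refine h ⟨{Aθ, Aθ, Bθ, Bθ}, {Sθ, S'θ}, 0, (zero_add _).symm, (zero_add _).symm,
          by simp, ?_⟩
        intro y hy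
        refine ⟨Aθ, by simp, ?_⟩
        rcases Multiset.mem_cons.1 hy with rfl | hy
        · exact hAS
        · rw [Multiset.mem_singleton.1 hy]; exact O.trans hAS hS
      · exact hSA
  refine ⟨hA, ?_⟩
  by_cases e : Bθ = Sθ
  · exfalso
    refine h ⟨{Aθ, Aθ, Bθ}, {S'θ}, {Sθ}, ?_, ?_, by simp, ?_⟩
    · rw [e, Multiset.singleton_add]
      show Aθ ::ₘ Aθ ::ₘ Sθ ::ₘ Sθ ::ₘ 0 = Sθ ::ₘ ({Aθ, Aθ, Sθ} : Multiset (Trm F V))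
      simp only [Multiset.insert_eq_cons]
      rw [Multiset.cons_swap Sθ Aθ, Multiset.cons_swap Sθ Aθ]
      rfl
    · rw [Multiset.singleton_add]; simp [Multiset.insert_eq_cons]
    · intro y hy
      rw [Multiset.mem_singleton.1 hy]
      exact ⟨Bθ, by simp, e ▸ hS⟩
  · rcases O.total_ground gB gS e with hBS | hSB
    · exfalso
      refine h ⟨{Aθ, Aθ, Bθ, Bθ}, {Sθ, S'θ}, 0, (zero_add _).symm, (zero_add _).symm,
        by simp, ?_⟩
      intro y hy
      refine ⟨Bθ, by simp, ?_⟩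
      rcases Multiset.mem_cons.1 hy with rfl | hy
      · exact hBS
      · rw [Multiset.mem_singleton.1 hy]; exact O.trans hBS hS
    · exact hSB

private theorem max_pos_lt {Sθ S'θ R'θ : Trm F V} (gS : Sθ.IsGround) (gR' : R'θ.IsGround)
    (hS : O.gt Sθ S'θ)
    (h : ¬ MultGT O.gt ({Sθ, R'θ} : Multiset (Trm F V)) ({Sθ, S'θ})) :
    O.gt Sθ R'θ := by
  by_cases e : R'θ = Sθ
  · exfalso
    refine h ⟨{R'θ}, {S'θ}, {Sθ}, ?_, ?_, by simp, ?_⟩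
    · rw [Multiset.singleton_add]; simp [Multiset.insert_eq_cons]
    · rw [Multiset.singleton_add]; simp [Multiset.insert_eq_cons]
    · intro y hy
      rw [Multiset.mem_singleton.1 hy]
      exact ⟨R'θ, by simp, e ▸ hS⟩
  · rcases O.total_ground gR' gS e with hRS | hSR
    · exfalso
      refine h ⟨{R'θ}, {S'θ}, {Sθ}, ?_, ?_, by simp, ?_⟩
      · rw [Multiset.singleton_add]; simp [Multiset.insert_eq_cons]
      · rw [Multiset.singleton_add]; simp [Multiset.insert_eq_cons]
      · intro y hy
        rw [Multiset.mem_singleton.1 hy]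
        exact ⟨R'θ, by simp, O.trans hRS hS⟩
    · exact hSR

private def Gm (θ : V → Trm F V) : Lit F V → Multiset (Multiset (Trm F V))
  | .pos a b => {({a.subst θ, b.subst θ} : Multiset (Trm F V))}
  | .neg _ _ => 0

private theorem nmN_eq (R : Set (Trm F V × Trm F V)) (C : Clause F V) (θ : V → Trm F V) :
    nmN R C θ = (ssN C).sum (nmNElt R θ) +
      (tsN C).sum (fun w => {({nf R (w.subst θ), nf R (w.subst θ)} : Multiset (Trm F V))}) +
      (C.map (Gm θ)).sum := by
  rfl

end EqFactAux

/-- Lemma 15, non-Horn case: the conclusion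
`((C' ∨ s' ≉ r' ∨ r ≈ r')σ · θ)` of a ground Equality Factoring inference is smaller
than its premise `(C' ∨ r ≈ r' ∨ s ≈ s' · θ)` in the non-Horn `R`-normalization
closure ordering, for every left-reduced ground rewrite system `R` contained in `≻`. -/
theorem eqfact_reduces_nonhorn {F V : Type} (O : ReductionOrdering F V) (T : TieBreak F V)
    (C' : Clause F V) (r r' s s' : Trm F V) (σ θ : V → Trm F V)
    (hg : Closure.IsGround (C' + {Lit.pos r r'} + {Lit.pos s s'}, θ))
    (heq : s.subst θ = r.subst θ)
    (hmgu : IsMGU σ s r)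
    (hgt : O.gt (s.subst θ) (s'.subst θ))
    (hmax : MaxIn O (Lit.subst θ (Lit.pos s s')) (Clause.subst θ (C' + {Lit.pos r r'}))) :
    ∀ R : Set (Trm F V × Trm F V), GoodRS O R →
      cloGTN O T R (C' + {Lit.pos r r'} + {Lit.pos s s'}, θ)
        (Clause.subst σ (C' + {Lit.neg s' r'} + {Lit.pos r r'}), θ) := by
  intro R hR
  have hc : ∀ t : Trm F V, (t.subst σ).subst θ = t.subst θ := by
    intro t
    rw [subst_subst]
    congr 1
    funext x
    exact hmgu.2 θ heq x
  -- groundness of premise literal instances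
  have hgL : ∀ L ∈ (C' + {Lit.pos r r'} + {Lit.pos s s'} : Clause F V),
      (Lit.subst θ L).IsGround := by
    intro L hL
    exact hg _ (Multiset.mem_map_of_mem _ hL)
  have hgss' : (s.subst θ).IsGround ∧ (s'.subst θ).IsGround := by
    have := hgL (Lit.pos s s') (Multiset.mem_add.2 (Or.inr (Multiset.mem_singleton.2 rfl)))
    simpa [Lit.subst, Lit.IsGround] using this
  have hgrr' : (r.subst θ).IsGround ∧ (r'.subst θ).IsGround := by
    have := hgL (Lit.pos r r') (Multiset.mem_add.2 (Or.inl
      (Multiset.mem_add.2 (Or.inr (Multiset.mem_singleton.2 rfl)))))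
    simpa [Lit.subst, Lit.IsGround] using this
  -- maximality consequences
  have hmaxr : O.gt (s.subst θ) (r'.subst θ) := by
    have h := hmax (Lit.subst θ (Lit.pos r r')) (Multiset.mem_map_of_mem _
      (Multiset.mem_add.2 (Or.inr (Multiset.mem_singleton.2 rfl))))
    refine max_pos_lt hgss'.1 hgrr'.2 hgt ?_
    intro hM
    apply h
    simp only [litGT, Lit.subst, Lit.mset, ← heq]
    exact hM
  have hmaxneg : ∀ a b : Trm F V, Lit.neg a b ∈ C' →
      O.gt (s.subst θ) (a.subst θ) ∧ O.gt (s.subst θ) (b.subst θ) := by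
    intro a b hab
    have hgab : (a.subst θ).IsGround ∧ (b.subst θ).IsGround := by
      have := hgL (Lit.neg a b) (Multiset.mem_add.2 (Or.inl (Multiset.mem_add.2 (Or.inl hab))))
      simpa [Lit.subst, Lit.IsGround] using this
    have h := hmax (Lit.subst θ (Lit.neg a b)) (Multiset.mem_map_of_mem _
      (Multiset.mem_add.2 (Or.inl hab)))
    refine max_neg_lt hgss'.1 hgab.1 hgab.2 hgt ?_
    intro hM
    apply h
    simp only [litGT, Lit.subst, Lit.mset]
    exact hM
  -- domination of normalization-multiset elements
  have key : ∀ t : Trm F V, (t.subst θ).IsGround → O.gt (s.subst θ) (t.subst θ) →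
      ∀ y ∈ nmNElt R θ t,
        MultGT O.gt ({s.subst θ, s'.subst θ} : Multiset (Trm F V)) y := by
    intro t hground hlt y hy
    obtain ⟨u, rfl, hu⟩ := nmNElt_bound hR θ hground y hy
    exact multGT_pair (gtGe hlt hu) (gtGe hlt hu)
  -- sides of negative literals of the conclusion
  have side_fact : ∀ L ∈ Clause.subst σ (C' + {Lit.neg s' r'} + {Lit.pos r r'}),
      ∀ a b : Trm F V, L = Lit.neg a b →
        ((a.subst θ).IsGround ∧ O.gt (s.subst θ) (a.subst θ)) ∧
        ((b.subst θ).IsGround ∧ O.gt (s.subst θ) (b.subst θ)) := by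
    intro L hL a b hLab
    subst hLab
    obtain ⟨L₀, hL₀, hEq⟩ := Multiset.mem_map.1 hL
    rcases Multiset.mem_add.1 hL₀ with hL₀ | hL₀
    · rcases Multiset.mem_add.1 hL₀ with hL₀ | hL₀
      · -- L₀ ∈ C'
        cases L₀ with
        | pos u v => simp [Lit.subst] at hEq
        | neg u v =>
          have huv : u.subst σ = a ∧ v.subst σ = b := by
            simpa [Lit.subst] using hEq
          obtain ⟨rfl, rfl⟩ := huv
          have h1 := hmaxneg u v hL₀
          have hguv : (u.subst θ).IsGround ∧ (v.subst θ).IsGround := by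
            have := hgL (Lit.neg u v)
              (Multiset.mem_add.2 (Or.inl (Multiset.mem_add.2 (Or.inl hL₀))))
            simpa [Lit.subst, Lit.IsGround] using this
          rw [hc u, hc v]
          exact ⟨⟨hguv.1, h1.1⟩, ⟨hguv.2, h1.2⟩⟩
      · -- L₀ = neg s' r'
        have hL₀' : L₀ = Lit.neg s' r' := Multiset.mem_singleton.1 hL₀
        subst hL₀'
        have huv : s'.subst σ = a ∧ r'.subst σ = b := by
          simpa [Lit.subst] using hEq
        obtain ⟨rfl, rfl⟩ := huv
        rw [hc s', hc r']
        exact ⟨⟨hgss'.2, hgt⟩, ⟨hgrr'.2, hmaxr⟩⟩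
    · -- L₀ = pos r r'
      have hL₀' : L₀ = Lit.pos r r' := Multiset.mem_singleton.1 hL₀
      subst hL₀'
      simp [Lit.subst] at hEq
  -- handle any element coming from negative-literal subterms of the conclusion
  have domA : ∀ y ∈ (ssN (Clause.subst σ (C' + {Lit.neg s' r'} + {Lit.pos r r'}))).sum
      (nmNElt R θ),
      MultGT O.gt ({s.subst θ, s'.subst θ} : Multiset (Trm F V)) y := by
    intro y hy
    obtain ⟨t, ht, hyt⟩ := Multiset.mem_sum.1 hy
    obtain ⟨L, hLf, htL⟩ := Finset.mem_sup.1 ht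
    have hLmem := Multiset.mem_toFinset.1 hLf
    cases L with
    | pos u v => simp [Lit.negSubs] at htL
    | neg a b =>
      have hfacts := side_fact _ hLmem a b rfl
      rcases Finset.mem_union.1 htL with htL' | htL'
      · have h1 : t.subst θ ∈ (a.subst θ).subterms := subst_subterms θ a t htL'
        have h2 : (t.subst θ).IsGround := ground_of_mem_subterms hfacts.1.1 _ h1
        have h3 : O.gt (s.subst θ) (t.subst θ) :=
          gtGe hfacts.1.2 (gt_of_subterm hfacts.1.1 h2 h1)
        exact key t h2 h3 y hyt
      · have h1 : t.subst θ ∈ (b.subst θ).subterms := subst_subterms θ b t htL'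
        have h2 : (t.subst θ).IsGround := ground_of_mem_subterms hfacts.2.1 _ h1
        have h3 : O.gt (s.subst θ) (t.subst θ) :=
          gtGe hfacts.2.2 (gt_of_subterm hfacts.2.1 h2 h1)
        exact key t h2 h3 y hyt
  have domB : ∀ y ∈ (tsN (Clause.subst σ (C' + {Lit.neg s' r'} + {Lit.pos r r'}))).sum
      (fun w => ({({nf R (w.subst θ), nf R (w.subst θ)} : Multiset (Trm F V))} :
        Multiset (Multiset (Trm F V)))),
      MultGT O.gt ({s.subst θ, s'.subst θ} : Multiset (Trm F V)) y := by
    intro y hy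
    obtain ⟨w, hw, hyw⟩ := Multiset.mem_sum.1 hy
    obtain ⟨L, hLf, hwL⟩ := Finset.mem_sup.1 hw
    have hLmem := Multiset.mem_toFinset.1 hLf
    rw [Multiset.mem_singleton.1 hyw]
    cases L with
    | pos u v => simp [Lit.negTops] at hwL
    | neg a b =>
      have hfacts := side_fact _ hLmem a b rfl
      have hwgt : (w.subst θ).IsGround ∧ O.gt (s.subst θ) (w.subst θ) := by
        rcases Finset.mem_insert.1 hwL with rfl | hwL'
        · exact hfacts.1
        · rw [Finset.mem_singleton.1 hwL']
          exact hfacts.2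
      have hnf : O.gt (s.subst θ) (nf R (w.subst θ)) :=
        gtGe hwgt.2 (nf_ge hR (w.subst θ)).1
      exact multGT_pair hnf hnf
  -- assemble the multiset extension
  refine Or.inl ?_
  show MultGT (MultGT O.gt)
    (nmN R (C' + {Lit.pos r r'} + {Lit.pos s s'}) θ)
    (nmN R (Clause.subst σ (C' + {Lit.neg s' r'} + {Lit.pos r r'})) θ)
  rw [nmN_eq, nmN_eq]
  have hPp : ((C' + {Lit.pos r r'} + {Lit.pos s s'} : Clause F V).map (Gm θ)).sum
      = (C'.map (Gm θ)).sum + ({({r.subst θ, r'.subst θ} : Multiset (Trm F V))} +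
        {({s.subst θ, s'.subst θ} : Multiset (Trm F V))}) := by
    simp [Multiset.map_add, Multiset.sum_add, Gm, add_assoc]
  have hmapC' : ((Clause.subst σ C').map (Gm θ)).sum = (C'.map (Gm θ)).sum := by
    show ((C'.map (Lit.subst σ)).map (Gm θ)).sum = _
    rw [Multiset.map_map]
    refine congrArg Multiset.sum (Multiset.map_congr rfl ?_)
    intro L _
    cases L with
    | pos a b => simp [Lit.subst, Gm, Function.comp, hc]
    | neg a b => simp [Lit.subst, Gm, Function.comp]
  have hPc : ((Clause.subst σ (C' + {Lit.neg s' r'} + {Lit.pos r r'})).map (Gm θ)).sum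
      = (C'.map (Gm θ)).sum + {({r.subst θ, r'.subst θ} : Multiset (Trm F V))} := by
    show (((C' + {Lit.neg s' r'} + {Lit.pos r r'} : Clause F V).map (Lit.subst σ)).map
      (Gm θ)).sum = _
    rw [Multiset.map_add, Multiset.map_add]
    rw [Multiset.map_add, Multiset.map_add, Multiset.sum_add, Multiset.sum_add]
    have h2 : ((({Lit.neg s' r'} : Clause F V).map (Lit.subst σ)).map (Gm θ)).sum = 0 := by
      simp [Lit.subst, Gm]
    have h3 : ((({Lit.pos r r'} : Clause F V).map (Lit.subst σ)).map (Gm θ)).sum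
        = {({r.subst θ, r'.subst θ} : Multiset (Trm F V))} := by
      simp [Lit.subst, Gm, hc]
    rw [h2, h3, add_zero]
    rw [show ((C'.map (Lit.subst σ)).map (Gm θ)).sum = (C'.map (Gm θ)).sum from hmapC']
  rw [hPp, hPc]
  refine ⟨(ssN (C' + {Lit.pos r r'} + {Lit.pos s s'})).sum (nmNElt R θ) +
      (tsN (C' + {Lit.pos r r'} + {Lit.pos s s'})).sum
        (fun w => {({nf R (w.subst θ), nf R (w.subst θ)} : Multiset (Trm F V))}) +
      {({s.subst θ, s'.subst θ} : Multiset (Trm F V))},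
    (ssN (Clause.subst σ (C' + {Lit.neg s' r'} + {Lit.pos r r'}))).sum (nmNElt R θ) +
      (tsN (Clause.subst σ (C' + {Lit.neg s' r'} + {Lit.pos r r'}))).sum
        (fun w => {({nf R (w.subst θ), nf R (w.subst θ)} : Multiset (Trm F V))}),
    (C'.map (Gm θ)).sum + {({r.subst θ, r'.subst θ} : Multiset (Trm F V))},
    by abel, by abel, ?_, ?_⟩
  · intro h
    apply_fun Multiset.card at h
    simp at h
  · intro y hy
    refine ⟨({s.subst θ, s'.subst θ} : Multiset (Trm F V)),
      Multiset.mem_add.2 (Or.inr (Multiset.mem_singleton.2 rfl)), ?_⟩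
    rcases Multiset.mem_add.1 hy with hy | hy
    · exact domA y hy
    · exact domB y hy
end
end
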